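/- arXiv:1805.03231 — 2 statements merged into one kernel-verified Lean document; each statement's English description precedes it below -/
import Mathlib

section
/- Let A, B, X be bounded operators on a complex Hilbert space H, let r ≥ 0, and let p, q > 1 satisfy 1/p + 1/q = 1 with p·r ≥ 2 and q·r ≥ 2. Then for every unit vector k ∈ H, |⟨A* X B k, k⟩|^r ≤ ‖X‖^r · ⟨((1/p)(A*A)^(pr/2) + (1/q)(B*B)^(qr/2)) k, k⟩. -/
open scoped InnerProductSpace
open ContinuousLinearMap Complex

variable {H : Type*} [NormedAddCommGroup H] [InnerProductSpace ℂ H] [CompleteSpace H]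

/-- `T ^ e` for a (positive) operator `T`, via the continuous functional calculus. -/
noncomputable def opow (T : H →L[ℂ] H) (e : ℝ) : H →L[ℂ] H :=
  cfc (fun t : ℝ => t ^ e) T

/-- The absolute value `|T| = (T*T)^(1/2)` of an operator. -/
noncomputable def oabs (T : H →L[ℂ] H) : H →L[ℂ] H :=
  cfc Real.sqrt (ContinuousLinearMap.adjoint T * T)

/-!
Since `⟪A† X B k, k⟫ = ⟪X B k, A k⟫`, the left side is at most `(‖X‖ ‖A k‖ ‖B k‖) ^ r`, and Young's
inequality splits `(‖A k‖ ‖B k‖) ^ r` into `‖A k‖ ^ (p r) / p + ‖B k‖ ^ (q r) / q`. Finally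
`‖A k‖ ^ (p r) = ⟪A† A k, k⟫ ^ (p r / 2) ≤ ⟪(A† A) ^ (p r / 2) k, k⟫` by McCarthy's inequality, which
holds because the exponent is at least `1`.
-/

theorem tangent_line_le_rpow {s c t : ℝ} (hs : 1 ≤ s) (hc : 0 ≤ c) (ht : 0 ≤ t) :
    (1 - s) * c ^ s + s * c ^ (s - 1) * t ≤ t ^ s := by
  have hs₀ : 0 < s := by linarith
  have amgm := Real.geom_mean_le_arith_mean2_weighted (p₁ := c ^ s) (p₂ := t ^ s)
    (sub_nonneg.2 (inv_le_one_of_one_le₀ hs)) (inv_nonneg.2 hs₀.le)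
    (Real.rpow_nonneg hc s) (Real.rpow_nonneg ht s) (sub_add_cancel 1 s⁻¹)
  rw [← Real.rpow_mul hc, ← Real.rpow_mul ht, mul_one_sub, mul_inv_cancel₀ hs₀.ne',
    Real.rpow_one] at amgm
  have := mul_le_mul_of_nonneg_left amgm hs₀.le
  field_simp at this
  linarith

section

variable {𝕜 E F G : Type*} [RCLike 𝕜]
  [NormedAddCommGroup E] [InnerProductSpace 𝕜 E]
  [NormedAddCommGroup F] [InnerProductSpace 𝕜 F]
  [NormedAddCommGroup G] [InnerProductSpace 𝕜 G]

open RCLike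

theorem re_inner_le_re_inner_of_le {S T : E →L[𝕜] E} (h : S ≤ T) (x : E) :
    re ⟪S x, x⟫_𝕜 ≤ re ⟪T x, x⟫_𝕜 := by
  simpa [inner_sub_left] using ((le_def S T).mp h).re_inner_nonneg_left x

variable [CompleteSpace E] [CompleteSpace G]

theorem norm_inner_adjoint_apply_le (A : E →L[𝕜] G) (X : F →L[𝕜] G) (B : E →L[𝕜] F) (x : E) :
    ‖⟪adjoint A (X (B x)), x⟫_𝕜‖ ≤ ‖X‖ * (‖A x‖ * ‖B x‖) := by
  rw [adjoint_inner_left]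
  calc ‖⟪X (B x), A x⟫_𝕜‖ ≤ ‖X (B x)‖ * ‖A x‖ := norm_inner_le_norm _ _
    _ ≤ ‖X‖ * ‖B x‖ * ‖A x‖ := by gcongr; exact X.le_opNorm _
    _ = ‖X‖ * (‖A x‖ * ‖B x‖) := by ring

end

section

variable {E : Type*} [NormedAddCommGroup E] [InnerProductSpace ℂ E]

theorem re_inner_smul_add_smul_apply (a b : ℝ) (S T : E →L[ℂ] E) (x : E) :
    (⟪(a • S + b • T) x, x⟫_ℂ).re = a * (⟪S x, x⟫_ℂ).re + b * (⟪T x, x⟫_ℂ).re := by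
  simp

end

/-- McCarthy's inequality: the tangent line of `t ↦ t ^ s` at `⟪T k, k⟫` lies below `t ^ s` on the
spectrum of `T`, and the functional calculus turns this into an operator inequality. -/
theorem rpow_re_inner_le_re_inner_opow {T : H →L[ℂ] H} (hT : 0 ≤ T) {s : ℝ} (hs : 1 ≤ s)
    {k : H} (hk : ‖k‖ = 1) : (⟪T k, k⟫_ℂ).re ^ s ≤ (⟪opow T s k, k⟫_ℂ).re := by
  set c := (⟪T k, k⟫_ℂ).re
  have hc : 0 ≤ c := ((nonneg_iff_isPositive T).mp hT).re_inner_nonneg_left k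
  have tangent_le : ((1 - s) * c ^ s) • (1 : H →L[ℂ] H) + (s * c ^ (s - 1)) • T ≤ opow T s := by
    calc _ = cfc (fun t : ℝ => (1 - s) * c ^ s + s * c ^ (s - 1) * t) T := by
          rw [cfc_const_add _ _ T, cfc_const_mul_id _ T, Algebra.algebraMap_eq_smul_one]
      _ ≤ opow T s := cfc_mono (fun t ht => tangent_line_le_rpow hs hc
          (spectrum_nonneg_of_nonneg hT ht)) (by fun_prop)
          ((Real.continuous_rpow_const (by linarith)).continuousOn)
  have hcs : c ^ s = c ^ (s - 1) * c := by
    rw [← Real.rpow_add_one' hc (by linarith), sub_add_cancel]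
  have hkk : (⟪k, k⟫_ℂ).re = 1 := by simp [hk]
  have hle := re_inner_le_re_inner_of_le tangent_le k
  simp only [RCLike.re_to_complex, re_inner_smul_add_smul_apply,
    one_apply_eq_self, hkk] at hle
  calc c ^ s = (1 - s) * c ^ s * 1 + s * c ^ (s - 1) * c := by rw [hcs]; ring
    _ ≤ _ := hle

theorem norm_apply_rpow_le_re_inner_opow (A : H →L[ℂ] H) {s : ℝ} (hs : 2 ≤ s) {k : H}
    (hk : ‖k‖ = 1) : ‖A k‖ ^ s ≤ (⟪opow (adjoint A * A) (s / 2) k, k⟫_ℂ).re := by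
  have hpos : 0 ≤ adjoint A * A := by simpa [star_eq_adjoint] using star_mul_self_nonneg A
  calc ‖A k‖ ^ s = (‖A k‖ ^ 2) ^ (s / 2) := by
        rw [← Real.rpow_natCast, ← Real.rpow_mul (norm_nonneg _)]; ring_nf
    _ = (⟪(adjoint A * A) k, k⟫_ℂ).re ^ (s / 2) := by
        rw [apply_norm_sq_eq_inner_adjoint_left]; rfl
    _ ≤ _ := rpow_re_inner_le_re_inner_opow hpos (by linarith) hk

theorem berezin_pointwise_holder_general (A B X : H →L[ℂ] H) (r p q : ℝ) (hr : 0 ≤ r)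
    (hp : 1 < p) (hpq : 1 / p + 1 / q = 1)
    (hpr : 2 ≤ p * r) (hqr : 2 ≤ q * r) (k : H) (hk : ‖k‖ = 1) :
    ‖⟪(ContinuousLinearMap.adjoint A * X * B) k, k⟫_ℂ‖ ^ r ≤
      ‖X‖ ^ r *
        (⟪((1 / p) • opow (ContinuousLinearMap.adjoint A * A) (p * r / 2) +
            (1 / q) • opow (ContinuousLinearMap.adjoint B * B) (q * r / 2)) k, k⟫_ℂ).re := by
  have hpq' : p.HolderConjugate q := Real.holderConjugate_iff.mpr ⟨hp, by simpa using hpq⟩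
  have hp₀ := hpq'.pos
  have hq₀ := hpq'.symm.pos
  rw [re_inner_smul_add_smul_apply]
  calc ‖⟪adjoint A (X (B k)), k⟫_ℂ‖ ^ r ≤ (‖X‖ * (‖A k‖ * ‖B k‖)) ^ r := by
        gcongr; exact norm_inner_adjoint_apply_le A X B k
    _ = ‖X‖ ^ r * (‖A k‖ ^ r * ‖B k‖ ^ r) := by
        rw [Real.mul_rpow (by positivity) (by positivity),
          Real.mul_rpow (norm_nonneg _) (norm_nonneg _)]
    _ ≤ ‖X‖ ^ r * ((‖A k‖ ^ r) ^ p / p + (‖B k‖ ^ r) ^ q / q) := by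
        gcongr; exact Real.young_inequality_of_nonneg (by positivity) (by positivity) hpq'
    _ = ‖X‖ ^ r * (1 / p * ‖A k‖ ^ (p * r) + 1 / q * ‖B k‖ ^ (q * r)) := by
        rw [← Real.rpow_mul (norm_nonneg _), ← Real.rpow_mul (norm_nonneg _)]; ring_nf
    _ ≤ _ := by
        gcongr
        · exact norm_apply_rpow_le_re_inner_opow A hpr hk
        · exact norm_apply_rpow_le_re_inner_opow B hqr hk

theorem berezin_pointwise_holder (A B X : H →L[ℂ] H) (r p q : ℝ) (hr : 0 ≤ r)
    (hp : 1 < p) (hq : 1 < q) (hpq : 1 / p + 1 / q = 1)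
    (hpr : 2 ≤ p * r) (hqr : 2 ≤ q * r) (k : H) (hk : ‖k‖ = 1) :
    ‖⟪(ContinuousLinearMap.adjoint A * X * B) k, k⟫_ℂ‖ ^ r ≤
      ‖X‖ ^ r *
        (⟪((1 / p) • opow (ContinuousLinearMap.adjoint A * A) (p * r / 2) +
            (1 / q) • opow (ContinuousLinearMap.adjoint B * B) (q * r / 2)) k, k⟫_ℂ).re :=
  berezin_pointwise_holder_general A B X r p q hr hp hpq hpr hqr k hk
end

section
/- Let A, B, X, Y be bounded operators on a complex Hilbert space H and 0 ≤ α ≤ 1. Then for every unit vector k ∈ H, |⟨(A*XB + B*YA) k, k⟩| ≤ (1/2)·⟨(B*|X|^(2α)B + A*|X*|^(2(1-α))A + A*|Y|^(2α)A + B*|Y*|^(2(1-α))B) k, k⟩. -/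
/-!
Kato's mixed Schwarz inequality in arithmetic–geometric form,
`‖⟪X u, v⟫‖ ≤ (⟪|X|^(2α) u, u⟫ + ⟪|X*|^(2(1-α)) v, v⟫) / 2`, applied to `⟪X (B k), A k⟫` and
`⟪Y (A k), B k⟫`, gives the theorem by the triangle inequality.

The mixed Schwarz inequality is proved without polar decomposition. For `ε > 0` put
`P = (X*X + ε)^(α/2)` and `Q = P⁻¹`, so that `X = (Q X*)* P` and Cauchy–Schwarz gives
`‖⟪X u, v⟫‖ ≤ (‖P u‖² + ‖Q X* v‖²) / 2`. Here `‖P u‖² = ⟪(X*X + ε)^α u, u⟫`, and since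
`X f(X*X) = f(XX*) X` (polynomial approximation of `f`),
`‖Q X* v‖² = ⟪(XX* + ε)^(-α) XX* v, v⟫ ≤ ⟪(XX*)^(1-α) v, v⟫`. Finally let `ε → 0`.
-/

open scoped InnerProductSpace
open ContinuousLinearMap Complex

variable {H : Type*} [NormedAddCommGroup H] [InnerProductSpace ℂ H] [CompleteSpace H]

open Polynomial Filter Topology

theorem SemiconjBy.aeval {R B : Type*} [CommSemiring R] [Semiring B] [Algebra R B] {x a b : B}
    (h : SemiconjBy x a b) (q : R[X]) : SemiconjBy x (aeval a q) (aeval b q) := by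
  induction q using Polynomial.induction_on' with
  | add p q hp hq => simpa only [map_add] using hp.add_right hq
  | monomial n c =>
    have hc : SemiconjBy x (algebraMap R B c) (algebraMap R B c) := (Algebra.commutes c x).symm
    simpa only [aeval_monomial] using hc.mul_right (h.pow_right n)

theorem exists_tendstoUniformlyOn_polynomial_eval {s : Set ℝ} (hs : IsCompact s) {f : ℝ → ℝ}
    (hf : ContinuousOn f s) :
    ∃ p : ℕ → ℝ[X], TendstoUniformlyOn (fun n t => (p n).eval t) f atTop s := by
  have := isCompact_iff_compactSpace.mp hs
  have hmem : (⟨s.domRestrict f, hf.domRestrict⟩ : C(s, ℝ)) ∈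
      closure (polynomialFunctions s : Set C(s, ℝ)) := by
    rw [← Subalgebra.topologicalClosure_coe, polynomialFunctions.topologicalClosure]
    trivial
  obtain ⟨g, hg, hlim⟩ := mem_closure_iff_seq_limit.mp hmem
  choose p hp using fun n => (hg n).imp fun _ h => h.2
  refine ⟨p, tendstoUniformlyOn_iff_tendstoUniformly_comp_coe.mpr ?_⟩
  have huniform := ContinuousMap.tendsto_iff_tendstoUniformly.mp hlim
  simp only [← hp] at huniform
  exact huniform

theorem Continuous.tendstoUniformlyOn_of_isCompact {α β γ : Type*} [UniformSpace α]
    [WeaklyLocallyCompactSpace α] [UniformSpace β] [UniformSpace γ] {s : Set β}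
    (hs : IsCompact s) {f : α → β → γ} (h : Continuous ↿f) (x : α) :
    TendstoUniformlyOn f (f x) (𝓝 x) s := by
  have := isCompact_iff_compactSpace.mp hs
  rw [tendstoUniformlyOn_iff_tendstoUniformly_comp_coe]
  exact Continuous.tendstoUniformly (fun a (b : s) => f a b)
    (h.comp (continuous_fst.prodMk (continuous_subtype_val.comp continuous_snd))) x

theorem Real.add_rpow_neg_mul_le_rpow_one_sub {t ε α : ℝ} (ht : 0 ≤ t) (hε : 0 ≤ ε) (hα : 0 ≤ α) :
    (t + ε) ^ (-α) * t ≤ t ^ (1 - α) := by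
  rcases ht.eq_or_lt with rfl | ht
  · simpa using Real.rpow_nonneg le_rfl (1 - α)
  calc (t + ε) ^ (-α) * t ≤ t ^ (-α) * t :=
        mul_le_mul_of_nonneg_right
          (Real.rpow_le_rpow_of_nonpos ht (by linarith) (by linarith)) ht.le
    _ = t ^ (1 - α) := by rw [sub_eq_neg_add, Real.rpow_add ht, Real.rpow_one]

section CStarAlgebra

variable {A : Type*} [CStarAlgebra A]

theorem mul_cfc_star_mul_self (x : A) {f : ℝ → ℝ}
    (hf : ContinuousOn f (spectrum ℝ (star x * x) ∪ spectrum ℝ (x * star x))) :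
    x * cfc f (star x * x) = cfc f (x * star x) * x := by
  obtain ⟨p, hp⟩ := exists_tendstoUniformlyOn_polynomial_eval
    ((spectrum.isCompact _).union (spectrum.isCompact _)) hf
  have hpoly : ∀ n, x * cfc (p n).eval (star x * x) = cfc (p n).eval (x * star x) * x := by
    intro n
    rw [cfc_polynomial (p n) (star x * x), cfc_polynomial (p n) (x * star x)]
    exact SemiconjBy.aeval (mul_assoc _ _ _).symm _
  have hcont : ∀ᶠ n in atTop, ∀ s, ContinuousOn (p n).eval s :=
    Eventually.of_forall fun n _ => (p n).continuousOn
  have ha := tendsto_cfc_fun (hp.mono Set.subset_union_left) (hcont.mono fun n h => h _)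
  have hb := tendsto_cfc_fun (hp.mono Set.subset_union_right) (hcont.mono fun n h => h _)
  refine tendsto_nhds_unique (ha.const_mul x) ?_
  simpa only [hpoly] using hb.mul_const x

theorem mul_cfc_add_rpow_neg_mul_star_le [PartialOrder A] [StarOrderedRing A] (x : A)
    {α ε : ℝ} (hα0 : 0 ≤ α) (hα1 : α ≤ 1) (hε : 0 < ε) :
    x * cfc (fun t : ℝ => (t + ε) ^ (-α)) (star x * x) * star x ≤
      cfc (fun t : ℝ => t ^ (1 - α)) (x * star x) := by
  have hspec : ∀ t ∈ spectrum ℝ (star x * x) ∪ spectrum ℝ (x * star x), 0 ≤ t := by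
    rintro t (ht | ht)
    · exact spectrum_nonneg_of_nonneg (star_mul_self_nonneg x) ht
    · exact spectrum_nonneg_of_nonneg (mul_star_self_nonneg x) ht
  have hg : ContinuousOn (fun t : ℝ => (t + ε) ^ (-α))
      (spectrum ℝ (star x * x) ∪ spectrum ℝ (x * star x)) :=
    (continuousOn_id.add continuousOn_const).rpow_const fun t ht =>
      Or.inl (add_pos_of_nonneg_of_pos (hspec t ht) hε).ne'
  rw [mul_cfc_star_mul_self x hg, mul_assoc]
  nth_rw 2 [← cfc_id' ℝ (x * star x)]
  rw [← cfc_mul _ _ _ (hg.mono Set.subset_union_right)]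
  exact cfc_mono
    (fun t ht => Real.add_rpow_neg_mul_le_rpow_one_sub (hspec t (Or.inr ht)) hε.le hα0)
    ((hg.mono Set.subset_union_right).mul continuousOn_id)
    (Real.continuous_rpow_const (by linarith)).continuousOn

end CStarAlgebra

namespace ContinuousLinearMap

variable {𝕜 E F : Type*} [RCLike 𝕜] [NormedAddCommGroup E] [InnerProductSpace 𝕜 E]
  [NormedAddCommGroup F] [InnerProductSpace 𝕜 F]

theorem re_inner_apply_self_le_of_le {S T : E →L[𝕜] E} (h : S ≤ T) (u : E) :
    RCLike.re (inner 𝕜 (S u) u) ≤ RCLike.re (inner 𝕜 (T u) u) := by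
  have := ((le_def S T).mp h).re_inner_nonneg_left u
  rwa [sub_apply, inner_sub_left, map_sub, sub_nonneg] at this

theorem norm_inner_adjoint_comp_apply_le [CompleteSpace E] [CompleteSpace F] (S T : E →L[𝕜] F)
    (u v : E) : ‖inner 𝕜 ((adjoint S ∘L T) u) v‖ ≤ (‖T u‖ ^ 2 + ‖S v‖ ^ 2) / 2 := by
  rw [comp_apply, adjoint_inner_left]
  nlinarith [norm_inner_le_norm (𝕜 := 𝕜) (T u) (S v), two_mul_le_add_sq ‖T u‖ ‖S v‖]

end ContinuousLinearMap

theorem norm_inner_apply_le_cfc_add_rpow (X : H →L[ℂ] H) {α ε : ℝ} (hα0 : 0 ≤ α) (hα1 : α ≤ 1)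
    (hε : 0 < ε) (u v : H) :
    ‖⟪X u, v⟫_ℂ‖ ≤ ((⟪cfc (fun t : ℝ => (t + ε) ^ α) (star X * X) u, u⟫_ℂ).re +
      (⟪cfc (fun t : ℝ => t ^ (1 - α)) (X * star X) v, v⟫_ℂ).re) / 2 := by
  set a := star X * X
  have hspec : ∀ t ∈ spectrum ℝ a, 0 < t + ε := fun t ht =>
    add_pos_of_nonneg_of_pos (spectrum_nonneg_of_nonneg (star_mul_self_nonneg X) ht) hε
  have hcont : ∀ β : ℝ, ContinuousOn (fun t : ℝ => (t + ε) ^ β) (spectrum ℝ a) := fun β =>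
    (continuousOn_id.add continuousOn_const).rpow_const fun t ht => Or.inl (hspec t ht).ne'
  have hmul : ∀ β γ : ℝ, cfc (fun t : ℝ => (t + ε) ^ β) a * cfc (fun t : ℝ => (t + ε) ^ γ) a =
      cfc (fun t : ℝ => (t + ε) ^ (β + γ)) a := fun β γ => by
    rw [← cfc_mul _ _ a (hcont β) (hcont γ)]
    exact cfc_congr fun t ht => (Real.rpow_add (hspec t ht) β γ).symm
  set P := cfc (fun t : ℝ => (t + ε) ^ (α / 2)) a
  set Q := cfc (fun t : ℝ => (t + ε) ^ (-(α / 2))) a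
  have hP : IsSelfAdjoint P := cfc_predicate _ a
  have hQ : IsSelfAdjoint Q := cfc_predicate _ a
  have hadj : adjoint (Q * star X) = X * Q := by
    rw [← star_eq_adjoint, star_mul, star_star, hQ.star_eq]
  have hX : X = adjoint (Q * star X) ∘L P := by
    rw [hadj, ← mul_def, mul_assoc, hmul, neg_add_cancel]
    simp only [Real.rpow_zero]
    rw [cfc_const_one ℝ a, mul_one]
  have hPu : ‖P u‖ ^ 2 = (⟪cfc (fun t : ℝ => (t + ε) ^ α) a u, u⟫_ℂ).re := by
    rw [apply_norm_sq_eq_inner_adjoint_left, hP.adjoint_eq, ← mul_def, hmul, add_halves,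
      RCLike.re_to_complex]
  have hQv : ‖(Q * star X) v‖ ^ 2 ≤ (⟪cfc (fun t : ℝ => t ^ (1 - α)) (X * star X) v, v⟫_ℂ).re := by
    have hQQ : adjoint (Q * star X) ∘L (Q * star X) =
        X * cfc (fun t : ℝ => (t + ε) ^ (-α)) (star X * X) * star X := by
      rw [hadj, ← mul_def, show -α = -(α / 2) + -(α / 2) by ring, ← hmul]
      simp only [Q, mul_assoc]
    rw [apply_norm_sq_eq_inner_adjoint_left, hQQ, RCLike.re_to_complex]
    exact re_inner_apply_self_le_of_le (mul_cfc_add_rpow_neg_mul_star_le X hα0 hα1 hε) v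
  calc ‖⟪X u, v⟫_ℂ‖ ≤ (‖P u‖ ^ 2 + ‖(Q * star X) v‖ ^ 2) / 2 := by
        conv_lhs => rw [hX]
        exact norm_inner_adjoint_comp_apply_le (Q * star X) P u v
    _ ≤ _ := by rw [hPu]; linarith

theorem norm_inner_apply_le_cfc_rpow (X : H →L[ℂ] H) {α : ℝ} (hα0 : 0 ≤ α) (hα1 : α ≤ 1) (u v : H) :
    ‖⟪X u, v⟫_ℂ‖ ≤ ((⟪cfc (fun t : ℝ => t ^ α) (star X * X) u, u⟫_ℂ).re +
      (⟪cfc (fun t : ℝ => t ^ (1 - α)) (X * star X) v, v⟫_ℂ).re) / 2 := by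
  have hF : Continuous ↿(fun (ε t : ℝ) => (t + ε) ^ α) :=
    (Real.continuous_rpow_const hα0).comp (continuous_snd.add continuous_fst)
  have hlim : Tendsto (fun ε : ℝ => cfc (fun t : ℝ => (t + ε) ^ α) (star X * X)) (𝓝[>] 0)
      (𝓝 (cfc (fun t : ℝ => t ^ α) (star X * X))) := by
    refine Tendsto.mono_left ?_ nhdsWithin_le_nhds
    simpa only [add_zero] using tendsto_cfc_fun
      (hF.tendstoUniformlyOn_of_isCompact (spectrum.isCompact _) 0)
      (Eventually.of_forall fun ε => (hF.comp (Continuous.prodMk_right ε)).continuousOn)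
  have hre : Continuous fun T : H →L[ℂ] H => (⟪T u, u⟫_ℂ).re := by fun_prop
  refine ge_of_tendsto (((hre.tendsto _).comp hlim).add_const _ |>.div_const 2) ?_
  filter_upwards [self_mem_nhdsWithin] with ε hε
  exact norm_inner_apply_le_cfc_add_rpow X hα0 hα1 hε u v

theorem opow_oabs_two_mul (X : H →L[ℂ] H) {β : ℝ} (hβ : 0 ≤ β) :
    opow (oabs X) (2 * β) = cfc (fun t : ℝ => t ^ β) (star X * X) := by
  rw [opow, oabs, ← star_eq_adjoint, ← cfc_comp' (fun t : ℝ => t ^ (2 * β)) Real.sqrt (star X * X)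
    (Real.continuous_rpow_const (by positivity)).continuousOn]
  refine cfc_congr fun t ht => ?_
  rw [Real.sqrt_eq_rpow, ← Real.rpow_mul (spectrum_nonneg_of_nonneg (star_mul_self_nonneg X) ht)]
  ring_nf

theorem berezin_pointwise_sum_general (A B X Y : H →L[ℂ] H) (α : ℝ)
    (hα0 : 0 ≤ α) (hα1 : α ≤ 1) (k : H) :
    ‖⟪(ContinuousLinearMap.adjoint A * X * B + ContinuousLinearMap.adjoint B * Y * A) k, k⟫_ℂ‖ ≤
      (1 / 2) *
        (⟪(ContinuousLinearMap.adjoint B * opow (oabs X) (2 * α) * B +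
            ContinuousLinearMap.adjoint A *
              opow (oabs (ContinuousLinearMap.adjoint X)) (2 * (1 - α)) * A +
            ContinuousLinearMap.adjoint A * opow (oabs Y) (2 * α) * A +
            ContinuousLinearMap.adjoint B *
              opow (oabs (ContinuousLinearMap.adjoint Y)) (2 * (1 - α)) * B) k, k⟫_ℂ).re := by
  have h1α : 0 ≤ 1 - α := by linarith
  have hconj : ∀ C S D : H →L[ℂ] H, ⟪(adjoint C * S * D) k, k⟫_ℂ = ⟪S (D k), C k⟫_ℂ :=
    fun C S D => adjoint_inner_left C k (S (D k))
  rw [opow_oabs_two_mul X hα0, opow_oabs_two_mul Y hα0, opow_oabs_two_mul _ h1α,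
    opow_oabs_two_mul _ h1α, ← star_eq_adjoint X, ← star_eq_adjoint Y, star_star, star_star]
  simp only [add_apply, inner_add_left, hconj, Complex.add_re]
  have hX := norm_inner_apply_le_cfc_rpow X hα0 hα1 (B k) (A k)
  have hY := norm_inner_apply_le_cfc_rpow Y hα0 hα1 (A k) (B k)
  linarith [norm_add_le ⟪X (B k), A k⟫_ℂ ⟪Y (A k), B k⟫_ℂ]

theorem berezin_pointwise_sum (A B X Y : H →L[ℂ] H) (α : ℝ)
    (hα0 : 0 ≤ α) (hα1 : α ≤ 1) (k : H) (hk : ‖k‖ = 1) :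
    ‖⟪(ContinuousLinearMap.adjoint A * X * B + ContinuousLinearMap.adjoint B * Y * A) k, k⟫_ℂ‖ ≤
      (1 / 2) *
        (⟪(ContinuousLinearMap.adjoint B * opow (oabs X) (2 * α) * B +
            ContinuousLinearMap.adjoint A *
              opow (oabs (ContinuousLinearMap.adjoint X)) (2 * (1 - α)) * A +
            ContinuousLinearMap.adjoint A * opow (oabs Y) (2 * α) * A +
            ContinuousLinearMap.adjoint B *
              opow (oabs (ContinuousLinearMap.adjoint Y)) (2 * (1 - α)) * B) k, k⟫_ℂ).re :=
  berezin_pointwise_sum_general A B X Y α hα0 hα1 k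
end
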